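/- For t > 0 define g : [0,∞) → ℝ by g(x) = Re G(i + x e^{iπ/6}) = -2t·log|i + x e^{iπ/6}| + t·Im( i + x e^{iπ/6} + (i + x e^{iπ/6})^{-1} ). Then g is differentiable on (0,∞) with g'(x) = (t/2)·( 1 - (2 + 4x)/(1 + x + x²) + (1 + 4x + x²)/(1 + x + x²)² ), this expression vanishes at x = 0, and g'(x) < 0 for all 0 < x < 1 + √3; in particular g is strictly decreasing on [0, 1 + √3], so Re G(i + x e^{iπ/6}) ≤ Re G(i) = 0 there. (Computation from the proof of Lemma 6.1 on the segment Γ_+^{(1)}.) -/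

import Mathlib

open scoped Real BigOperators

/-- `Re G(ξ)` for the spectral function `G(ξ) = -2t log ξ - it(ξ + ξ⁻¹)` (i.e. `x = -2t`). -/
noncomputable def ReG (t : ℝ) (ξ : ℂ) : ℝ :=
  -2 * t * Real.log (‖ξ‖) + t * (ξ + ξ⁻¹).im

/-- `Re H(ζ)` for the spectral function `H(ζ) = 2t log ζ - it(ζ + ζ⁻¹)` (i.e. `x = -2t`). -/
noncomputable def ReH (t : ℝ) (ζ : ℂ) : ℝ :=
  2 * t * Real.log (‖ζ‖) + t * (ζ + ζ⁻¹).im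

/-- The steep descent contour `Γ₊` built with radius `R`. -/
def GammaPlus (R : ℝ) : Set ℂ :=
  ({z | ∃ x : ℝ, 0 ≤ x ∧ z = Complex.I + (x : ℂ) * Complex.exp (Complex.I * ((Real.pi : ℂ) / 6))}
      ∩ Metric.closedBall Complex.I 1) ∪
  ({z | ∃ x : ℝ, 0 ≤ x ∧ z = Complex.I + (x : ℂ) * Complex.exp (Complex.I * (5 * (Real.pi : ℂ) / 6))}
      ∩ Metric.closedBall Complex.I 1) ∪
  (({z | ∃ x : ℝ, 0 ≤ x ∧ z = Complex.I + Complex.exp (Complex.I * ((Real.pi : ℂ) / 6)) + (x : ℂ)}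
      \ Metric.ball Complex.I 1) ∩ Metric.closedBall 0 R) ∪
  (({z | ∃ x : ℝ, 0 ≤ x ∧ z = Complex.I + Complex.exp (Complex.I * (5 * (Real.pi : ℂ) / 6)) - (x : ℂ)}
      \ Metric.ball Complex.I 1) ∩ Metric.closedBall 0 R) ∪
  {z | ‖z‖ = R ∧ z.im ≤ 3 / 2}

/-- The steep descent contour `Γ₋` built with radius `R`: the mirror image of `Γ₊`
across the real axis. -/
def GammaMinus (R : ℝ) : Set ℂ :=
  (fun z => (starRingEnd ℂ) z) '' GammaPlus R

/-!
On the ray `ξ = i + x e^{iπ/6}` one has `|ξ|² = 1 + x + x²` and `Im ξ = 1 + x/2`, so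
`Re G(ξ) = -t log (1 + x + x²) + t (1 + x/2) (1 - 1/(1 + x + x²))` is an explicit function of `x`.
Its derivative simplifies to `(t/2) x² (x² - 2x - 2) / (1 + x + x²)²`, which is negative between
`0` and the root `1 + √3` of `x² - 2x - 2`. Hence `Re G` decreases there from its value `0` at `ξ = i`.
-/

open Complex

theorem ReG_eq_log_normSq (t : ℝ) (ξ : ℂ) :
    ReG t ξ = -t * Real.log (normSq ξ) + t * (ξ.im - ξ.im / normSq ξ) := by
  rw [ReG, norm_def, Real.log_sqrt (normSq_nonneg ξ), add_im, inv_im]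
  ring

noncomputable def sixthRay (x : ℝ) : ℂ :=
  I + (x : ℂ) * exp (I * ((π : ℂ) / 6))

theorem exp_I_mul_pi_div_six : exp (I * ((π : ℂ) / 6)) = ⟨√3 / 2, 1 / 2⟩ := by
  rw [mul_comm, exp_mul_I, ← ofReal_ofNat, ← ofReal_div, ← ofReal_cos, ← ofReal_sin,
    Real.cos_pi_div_six, Real.sin_pi_div_six]
  apply Complex.ext <;> simp

theorem sixthRay_im (x : ℝ) : (sixthRay x).im = 1 + x / 2 := by
  simp [sixthRay, exp_I_mul_pi_div_six]
  ring

theorem normSq_sixthRay (x : ℝ) : normSq (sixthRay x) = 1 + x + x ^ 2 := by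
  have hsqrt : √3 ^ 2 = 3 := Real.sq_sqrt (by norm_num)
  rw [normSq_apply, sixthRay_im]
  simp only [sixthRay, exp_I_mul_pi_div_six, add_re, I_re, mul_re, ofReal_re, ofReal_im]
  linear_combination x ^ 2 / 4 * hsqrt

theorem quadratic_pos (x : ℝ) : 0 < 1 + x + x ^ 2 := by
  nlinarith [sq_nonneg (x + 1 / 2)]

theorem ReG_sixthRay (t x : ℝ) :
    ReG t (sixthRay x)
      = -t * Real.log (1 + x + x ^ 2) + t * (1 + x / 2) - t * (1 + x / 2) / (1 + x + x ^ 2) := by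
  rw [ReG_eq_log_normSq, normSq_sixthRay, sixthRay_im]
  ring

theorem hasDerivAt_ReG_sixthRay (t x : ℝ) :
    HasDerivAt (fun x => ReG t (sixthRay x))
      ((t / 2) * (1 - (2 + 4 * x) / (1 + x + x ^ 2)
          + (1 + 4 * x + x ^ 2) / (1 + x + x ^ 2) ^ 2)) x := by
  have hQ : 1 + x + x ^ 2 ≠ 0 := (quadratic_pos x).ne'
  have hq : HasDerivAt (fun x : ℝ => 1 + x + x ^ 2) (1 + 2 * x) x := by
    exact (((hasDerivAt_id x).const_add 1).add (hasDerivAt_pow 2 x)).congr_deriv (by norm_num)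
  have hlin : HasDerivAt (fun x : ℝ => t * (1 + x / 2)) (t * (1 / 2)) x :=
    (((hasDerivAt_id x).div_const 2).const_add 1).const_mul t
  have hsum := (((hq.log hQ).const_mul (-t)).add hlin).sub (hlin.div hq hQ)
  rw [funext (ReG_sixthRay t)]
  exact hsum.congr_deriv (by field_simp; ring)

theorem sixthRay_deriv_factor (x : ℝ) :
    1 - (2 + 4 * x) / (1 + x + x ^ 2) + (1 + 4 * x + x ^ 2) / (1 + x + x ^ 2) ^ 2
      = x ^ 2 * (x ^ 2 - 2 * x - 2) / (1 + x + x ^ 2) ^ 2 := by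
  have hQ : 1 + x + x ^ 2 ≠ 0 := (quadratic_pos x).ne'
  field_simp
  ring

theorem sq_sub_two_mul_sub_two_neg {x : ℝ} (hx : 0 ≤ x) (hx' : x < 1 + √3) :
    x ^ 2 - 2 * x - 2 < 0 := by
  have hsqrt : √3 ^ 2 = 3 := Real.sq_sqrt (by norm_num)
  have hone : 1 < √3 := by rw [Real.lt_sqrt zero_le_one]; norm_num
  have hroots : (x - (1 + √3)) * (x - (1 - √3)) < 0 :=
    mul_neg_of_neg_of_pos (by linarith) (by linarith)
  linear_combination hroots + hsqrt

theorem sixthRay_deriv_neg {t x : ℝ} (ht : 0 < t) (hx : 0 < x) (hx' : x < 1 + √3) :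
    (t / 2) * (1 - (2 + 4 * x) / (1 + x + x ^ 2)
        + (1 + 4 * x + x ^ 2) / (1 + x + x ^ 2) ^ 2) < 0 := by
  rw [sixthRay_deriv_factor]
  have hnum : x ^ 2 * (x ^ 2 - 2 * x - 2) < 0 :=
    mul_neg_of_pos_of_neg (by positivity) (sq_sub_two_mul_sub_two_neg hx.le hx')
  exact mul_neg_of_pos_of_neg (by positivity) (div_neg_of_neg_of_pos hnum (by positivity))

theorem strictAntiOn_ReG_sixthRay {t : ℝ} (ht : 0 < t) :
    StrictAntiOn (fun x => ReG t (sixthRay x)) (Set.Icc 0 (1 + √3)) := by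
  refine strictAntiOn_of_deriv_neg (convex_Icc _ _)
    (fun x _ => (hasDerivAt_ReG_sixthRay t x).continuousAt.continuousWithinAt) fun x hx => ?_
  rw [interior_Icc] at hx
  rw [(hasDerivAt_ReG_sixthRay t x).deriv]
  exact sixthRay_deriv_neg ht hx.1 hx.2

theorem ReG_sixthRay_zero (t : ℝ) : ReG t (sixthRay 0) = 0 := by
  rw [ReG_sixthRay]
  norm_num

theorem stmt16 (t : ℝ) (ht : 0 < t) :
    (∀ x : ℝ, 0 < x →
      HasDerivAt
        (fun x : ℝ =>
          ReG t (Complex.I + (x : ℂ) * Complex.exp (Complex.I * ((Real.pi : ℂ) / 6))))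
        ((t / 2) * (1 - (2 + 4 * x) / (1 + x + x ^ 2)
            + (1 + 4 * x + x ^ 2) / (1 + x + x ^ 2) ^ 2)) x) ∧
    ((t / 2) * (1 - (2 + 4 * (0 : ℝ)) / (1 + 0 + (0 : ℝ) ^ 2)
        + (1 + 4 * (0 : ℝ) + (0 : ℝ) ^ 2) / (1 + 0 + (0 : ℝ) ^ 2) ^ 2) = 0) ∧
    (∀ x : ℝ, 0 < x → x < 1 + Real.sqrt 3 →
      (t / 2) * (1 - (2 + 4 * x) / (1 + x + x ^ 2)
          + (1 + 4 * x + x ^ 2) / (1 + x + x ^ 2) ^ 2) < 0) ∧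
    StrictAntiOn
      (fun x : ℝ =>
        ReG t (Complex.I + (x : ℂ) * Complex.exp (Complex.I * ((Real.pi : ℂ) / 6))))
      (Set.Icc 0 (1 + Real.sqrt 3)) ∧
    (∀ x ∈ Set.Icc (0 : ℝ) (1 + Real.sqrt 3),
      ReG t (Complex.I + (x : ℂ) * Complex.exp (Complex.I * ((Real.pi : ℂ) / 6))) ≤ 0) := by
  have hanti := strictAntiOn_ReG_sixthRay ht
  refine ⟨fun x _ => hasDerivAt_ReG_sixthRay t x, by norm_num,
    fun x hx hx' => sixthRay_deriv_neg ht hx hx', hanti, fun x hx => ?_⟩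
  have h0 : (0 : ℝ) ∈ Set.Icc 0 (1 + √3) := Set.left_mem_Icc.2 (by positivity)
  calc ReG t (sixthRay x) ≤ ReG t (sixthRay 0) := hanti.antitoneOn h0 hx hx.1
    _ = 0 := ReG_sixthRay_zero t
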